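/- If A ∈ ℝ^{n×n} is an H-matrix, then the 2n×2n matrix S = [[S₁,S₂],[S₂,S₁]] (S₁ the positive part of A, S₂ = A − S₁) is nonsingular; consequently the crisp system S X = Y has a unique solution for every Y ∈ ℝ^{2n}. -/
import Mathlib


open Matrix Finset

variable {n : ℕ}

/-- `A` is an M-matrix: positive diagonal, nonpositive off-diagonal entries,
nonsingular with entrywise nonnegative inverse. -/
def IsMMat {m : Type*} [Fintype m] [DecidableEq m] (A : Matrix m m ℝ) : Prop :=
  (∀ i, 0 < A i i) ∧ (∀ i j, i ≠ j → A i j ≤ 0) ∧ A.det ≠ 0 ∧ ∀ i j, 0 ≤ A⁻¹ i j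

/-- The comparison matrix `M(A)`: `|a_ii|` on the diagonal, `-|a_ij|` off it. -/
def cmpMat {m : Type*} [Fintype m] [DecidableEq m] (A : Matrix m m ℝ) : Matrix m m ℝ :=
  Matrix.of fun i j => if i = j then |A i j| else -|A i j|

/-- `A` is an H-matrix if its comparison matrix is an M-matrix. -/
def IsHMat {m : Type*} [Fintype m] [DecidableEq m] (A : Matrix m m ℝ) : Prop :=
  IsMMat (cmpMat A)

/-- Strict diagonal dominance. -/
def SDD {m : Type*} [Fintype m] [DecidableEq m] (A : Matrix m m ℝ) : Prop :=
  ∀ i, ∑ j ∈ Finset.univ.erase i, |A i j| < |A i i|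

/-- Generalized strict diagonal dominance: witnessed by some positive vector `x`. -/
def GSDD {m : Type*} [Fintype m] [DecidableEq m] (A : Matrix m m ℝ) : Prop :=
  ∃ x : m → ℝ, (∀ i, 0 < x i) ∧
    ∀ i, ∑ j ∈ Finset.univ.erase i, |A i j| * x j < |A i i| * x i

/-- The positive part `S₁` of `A`. -/
noncomputable def sOne (A : Matrix (Fin n) (Fin n) ℝ) : Matrix (Fin n) (Fin n) ℝ :=
  Matrix.of fun i j => if 0 < A i j then A i j else 0

/-- The block matrix `S = [[S₁, S₂], [S₂, S₁]]` with `S₁` the positive part of `A`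
and `S₂ = A - S₁`. -/
noncomputable def Smat (A : Matrix (Fin n) (Fin n) ℝ) : Matrix (Fin n ⊕ Fin n) (Fin n ⊕ Fin n) ℝ :=
  Matrix.fromBlocks (sOne A) (A - sOne A) (A - sOne A) (sOne A)

/-- A permutation matrix: a 0-1 matrix with exactly one `1` in each row and column. -/
def IsPermMatrix {m : Type*} [Fintype m] [DecidableEq m] (P : Matrix m m ℝ) : Prop :=
  (∀ i j, P i j = 0 ∨ P i j = 1) ∧ (∀ i, ∃! j, P i j = 1) ∧ (∀ j, ∃! i, P i j = 1)

/-- The permutation matrix of size `2n` obtained from the identity by swapping rows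
`i` and `i + n` for each `i ≤ n` with `a_ii ≤ 0` (i.e. `S_ii = 0`). -/
noncomputable def permP (A : Matrix (Fin n) (Fin n) ℝ) :
    Matrix (Fin n ⊕ Fin n) (Fin n ⊕ Fin n) ℝ :=
  Matrix.of fun i j =>
    match i with
    | Sum.inl k => if A k k ≤ 0 then (if j = Sum.inr k then (1 : ℝ) else 0)
                   else (if j = Sum.inl k then 1 else 0)
    | Sum.inr k => if A k k ≤ 0 then (if j = Sum.inl k then (1 : ℝ) else 0)
                   else (if j = Sum.inr k then 1 else 0)

/-- The index map `σ` sending row `i` of `S` to the corresponding row of `A`. -/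
def sig : Fin n ⊕ Fin n → Fin n := Sum.elim id id


/-- The swap involution: swap `inl k` and `inr k` whenever `A k k ≤ 0`. -/
noncomputable def swapFun (A : Matrix (Fin n) (Fin n) ℝ) : Fin n ⊕ Fin n → Fin n ⊕ Fin n :=
  fun i => match i with
  | Sum.inl k => if A k k ≤ 0 then Sum.inr k else Sum.inl k
  | Sum.inr k => if A k k ≤ 0 then Sum.inl k else Sum.inr k

lemma swapFun_invol (A : Matrix (Fin n) (Fin n) ℝ) :
    Function.LeftInverse (swapFun A) (swapFun A) := by
  intro i
  rcases i with k | k <;> by_cases hk : A k k ≤ 0 <;> simp [swapFun, hk]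

/-- The swap permutation. -/
noncomputable def swapEquiv (A : Matrix (Fin n) (Fin n) ℝ) : Equiv.Perm (Fin n ⊕ Fin n) :=
  ⟨swapFun A, swapFun A, swapFun_invol A, swapFun_invol A⟩

lemma hmat_gsdd (A : Matrix (Fin n) (Fin n) ℝ) (h : IsHMat A) :
    ∃ x : Fin n → ℝ, (∀ i, 0 < x i) ∧
      ∀ i, ∑ j ∈ Finset.univ.erase i, |A i j| * x j < |A i i| * x i := by
  obtain ⟨hdiag, hoff, hdet, hinv⟩ := h
  set M := cmpMat A with hM
  set x := M⁻¹.mulVec (fun _ => 1) with hx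
  have hMx : M.mulVec x = fun _ => 1 := by
    rw [hx, Matrix.mulVec_mulVec, Matrix.mul_nonsing_inv _ (isUnit_iff_ne_zero.mpr hdet), Matrix.one_mulVec]
  have hxnn : ∀ i, 0 ≤ x i := by
    intro i
    rw [hx, Matrix.mulVec]
    exact Finset.sum_nonneg fun j _ => by
      simpa using mul_nonneg (hinv i j) zero_le_one
  have key : ∀ i, |A i i| * x i - ∑ j ∈ Finset.univ.erase i, |A i j| * x j = 1 := by
    intro i
    have := congrFun hMx i
    rw [Matrix.mulVec, dotProduct] at this
    rw [← Finset.add_sum_erase _ _ (Finset.mem_univ i)] at this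
    have hMi : M i i = |A i i| := by simp [hM, cmpMat]
    have hsum : ∑ j ∈ Finset.univ.erase i, M i j * x j
        = -∑ j ∈ Finset.univ.erase i, |A i j| * x j := by
      rw [← Finset.sum_neg_distrib]
      refine Finset.sum_congr rfl fun j hj => ?_
      have hij : i ≠ j := fun hij => (Finset.mem_erase.mp hj).1 hij.symm
      simp [hM, cmpMat, hij, neg_mul]
    rw [hMi, hsum] at this
    linarith
  have hxpos : ∀ i, 0 < x i := by
    intro i
    have hk := key i
    have hnn : 0 ≤ ∑ j ∈ Finset.univ.erase i, |A i j| * x j :=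
      Finset.sum_nonneg fun j _ => mul_nonneg (abs_nonneg _) (hxnn j)
    have : 0 < |A i i| * x i := by linarith
    rcases (hxnn i).lt_or_eq with h' | h'
    · exact h'
    · rw [← h'] at this; simp at this
  refine ⟨x, hxpos, fun i => by have := key i; linarith⟩

lemma abs_split (A : Matrix (Fin n) (Fin n) ℝ) (k j : Fin n) :
    |sOne A k j| + |(A - sOne A) k j| = |A k j| := by
  by_cases hp : 0 < A k j
  · simp [sOne, hp, abs_of_pos hp]
  · push_neg at hp
    simp [sOne, not_lt.mpr hp, abs_of_nonpos hp, abs_of_nonpos, hp]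

lemma abs_split' (A : Matrix (Fin n) (Fin n) ℝ) (k j : Fin n) :
    |(A - sOne A) k j| + |sOne A k j| = |A k j| := by
  rw [add_comm]; exact abs_split A k j

theorem stmt13 (A : Matrix (Fin n) (Fin n) ℝ) (h : IsHMat A) :
    (Smat A).det ≠ 0 ∧
    ∀ Y : Fin n ⊕ Fin n → ℝ, ∃! X : Fin n ⊕ Fin n → ℝ, (Smat A).mulVec X = Y := by
  obtain ⟨x, hxpos, hdom⟩ := hmat_gsdd A h
  set e := swapEquiv A with he
  set T := (Smat A).submatrix (e : (Fin n ⊕ Fin n) → (Fin n ⊕ Fin n)) id with hT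
  set B : Matrix (Fin n ⊕ Fin n) (Fin n ⊕ Fin n) ℝ :=
    Matrix.of (fun i j => T i j * x (sig j)) with hB
  -- diagonal of B
  have hdiagB : ∀ i, |B i i| = |A (sig i) (sig i)| * x (sig i) := by
    intro i
    have hx' : ∀ k, |x k| = x k := fun k => abs_of_pos (hxpos k)
    rcases i with k | k <;> by_cases hk : A k k ≤ 0 <;>
      simp only [hB, hT, he, Matrix.of_apply, Matrix.submatrix_apply, id_eq, swapEquiv,
        Equiv.coe_fn_mk, swapFun, sig, Sum.elim_inl, Sum.elim_inr]
    · rw [if_pos hk]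
      simp only [Smat, Matrix.fromBlocks_apply₂₁, Matrix.sub_apply, sOne, Matrix.of_apply,
        if_neg (not_lt.mpr hk), sub_zero]
      rw [abs_mul, hx']
    · rw [if_neg hk]
      simp only [Smat, Matrix.fromBlocks_apply₁₁, sOne, Matrix.of_apply,
        if_pos (lt_of_not_ge hk)]
      rw [abs_mul, hx']
    · rw [if_pos hk]
      simp only [Smat, Matrix.fromBlocks_apply₁₂, Matrix.sub_apply, sOne, Matrix.of_apply,
        if_neg (not_lt.mpr hk), sub_zero]
      rw [abs_mul, hx']
    · rw [if_neg hk]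
      simp only [Smat, Matrix.fromBlocks_apply₂₂, sOne, Matrix.of_apply,
        if_pos (lt_of_not_ge hk)]
      rw [abs_mul, hx']
  -- row sums of B
  have hrow : ∀ i, ∑ j, |B i j| = ∑ j : Fin n, |A (sig i) j| * x j := by
    intro i
    rw [Fintype.sum_sum_type]
    have hx' : ∀ k, |x k| = x k := fun k => abs_of_pos (hxpos k)
    have hcol : ∀ j : Fin n, |B i (Sum.inl j)| + |B i (Sum.inr j)|
        = |A (sig i) j| * x j := by
      intro j
      rcases i with k | k <;> by_cases hk : A k k ≤ 0 <;>
        simp only [hB, hT, he, Matrix.of_apply, Matrix.submatrix_apply, id_eq, swapEquiv,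
          Equiv.coe_fn_mk, swapFun, sig, Sum.elim_inl, Sum.elim_inr]
      · rw [if_pos hk]
        simp only [Smat, Matrix.fromBlocks_apply₂₁, Matrix.fromBlocks_apply₂₂]
        rw [abs_mul, abs_mul, hx', ← add_mul, abs_split']
      · rw [if_neg hk]
        simp only [Smat, Matrix.fromBlocks_apply₁₁, Matrix.fromBlocks_apply₁₂]
        rw [abs_mul, abs_mul, hx', ← add_mul, abs_split]
      · rw [if_pos hk]
        simp only [Smat, Matrix.fromBlocks_apply₁₁, Matrix.fromBlocks_apply₁₂]
        rw [abs_mul, abs_mul, hx', ← add_mul, abs_split]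
      · rw [if_neg hk]
        simp only [Smat, Matrix.fromBlocks_apply₂₁, Matrix.fromBlocks_apply₂₂]
        rw [abs_mul, abs_mul, hx', ← add_mul, abs_split']
    rw [← Finset.sum_add_distrib]
    exact Finset.sum_congr rfl fun j _ => hcol j
  -- B is strictly diagonally dominant
  have hSDD : ∀ i, ∑ j ∈ Finset.univ.erase i, |B i j| < |B i i| := by
    intro i
    have h1 : ∑ j ∈ Finset.univ.erase i, |B i j| = ∑ j, |B i j| - |B i i| := by
      rw [← Finset.add_sum_erase _ _ (Finset.mem_univ i)]; ring
    have h2 : (∑ j : Fin n, |A (sig i) j| * x j)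
        = |A (sig i) (sig i)| * x (sig i)
          + ∑ j ∈ Finset.univ.erase (sig i), |A (sig i) j| * x j :=
      (Finset.add_sum_erase _ _ (Finset.mem_univ (sig i))).symm
    rw [h1, hrow i, hdiagB i, h2]
    have := hdom (sig i)
    linarith
  -- determinant of B nonzero
  have hdetB : B.det ≠ 0 := by
    apply det_ne_zero_of_sum_row_lt_diag
    intro k
    simpa [Real.norm_eq_abs] using hSDD k
  -- B = T * diagonal
  have hBeq : B = T * Matrix.diagonal (fun j => x (sig j)) := by
    ext i j
    simp [hB, Matrix.mul_diagonal]
  have hdetT : T.det ≠ 0 := by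
    rw [hBeq, Matrix.det_mul, Matrix.det_diagonal] at hdetB
    exact fun h0 => hdetB (by rw [h0, zero_mul])
  have hdetS : (Smat A).det ≠ 0 := by
    rw [hT, Matrix.det_permute] at hdetT
    intro h0
    rw [h0, mul_zero] at hdetT
    exact hdetT rfl
  refine ⟨hdetS, fun Y => ?_⟩
  refine ⟨(Smat A)⁻¹.mulVec Y, ?_, ?_⟩
  · show Smat A *ᵥ ((Smat A)⁻¹ *ᵥ Y) = Y
    rw [Matrix.mulVec_mulVec, Matrix.mul_nonsing_inv _ (isUnit_iff_ne_zero.mpr hdetS), Matrix.one_mulVec]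
  · intro X hX
    have := congrArg ((Smat A)⁻¹.mulVec) hX
    rwa [Matrix.mulVec_mulVec, Matrix.nonsing_inv_mul _ (isUnit_iff_ne_zero.mpr hdetS), Matrix.one_mulVec] at this
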